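/- Let m > 0, ε > 0 and δ > 0. Then there exists K > 0 such that for every wavenumber k with |k| > K, every eigenvalue σ ∈ ℂ of the linear-stability matrix A_δ(k) satisfies Re σ < 0. Hence in the nonlocal model the range of unstable wavenumbers is bounded: patterns can form only for a finite range of wavelengths. -/

import Mathlib

/-- The nonlocal linear-stability matrix `A_δ(k)` for parameters `m, ε, δ` and
wavenumber `k`: `A_δ(k) = [[a,0,0,c],[0,a,c,0],[d,0,−b,0],[0,d,0,−b]]` with
`a = (1/(1+m)² − 1)k²`, `b = (1+m)/ε`, `c = −2(2 − 1/(1+m))·(k/δ)·sin(δk)`,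
`d = m/(ε(1+m))`. -/
noncomputable def Adelta (m ε δ k : ℝ) : Matrix (Fin 4) (Fin 4) ℝ :=
  !![(1 / (1 + m) ^ 2 - 1) * k ^ 2, 0, 0,
       -2 * (2 - 1 / (1 + m)) * (k / δ) * Real.sin (δ * k);
     0, (1 / (1 + m) ^ 2 - 1) * k ^ 2,
       -2 * (2 - 1 / (1 + m)) * (k / δ) * Real.sin (δ * k), 0;
     m / (ε * (1 + m)), 0, -((1 + m) / ε), 0;
     0, m / (ε * (1 + m)), 0, -((1 + m) / ε)]

/-- `σ ∈ ℂ` is an eigenvalue of the real matrix `M`. -/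
def IsEigC (M : Matrix (Fin 4) (Fin 4) ℝ) (σ : ℂ) : Prop :=
  (M.map (fun x : ℝ => (x : ℂ)) - σ • 1).det = 0

/-!
The characteristic polynomial of `A_δ(k)` factors as
`((a - σ)(b + σ) - cd)((a - σ)(b + σ) + cd)`, a product of two real quadratics
`σ² + (b - a)σ + (-ab ∓ cd)`. Both are Hurwitz as soon as `|cd| < -ab`. Here
`-ab = (1 - 1/(1+m)²)·b·k²` grows quadratically in `k`, while `|c| ≤ 2(2 - 1/(1+m))|k|/δ`
grows only linearly, so `|cd| < -ab` for all large `|k|`.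
-/

theorem det_sub_smul_one_fourBlock {R : Type*} [CommRing R] (a b c d σ : R) :
    (!![a, 0, 0, c; 0, a, c, 0; d, 0, -b, 0; 0, d, 0, -b] - σ • 1).det =
      ((a - σ) * (b + σ) - c * d) * ((a - σ) * (b + σ) + c * d) := by
  have hshift : !![a, 0, 0, c; 0, a, c, 0; d, 0, -b, 0; 0, d, 0, -b] - σ • 1 =
      !![a - σ, 0, 0, c; 0, a - σ, c, 0; d, 0, -b - σ, 0; 0, d, 0, -b - σ] := by
    ext i j
    fin_cases i <;> fin_cases j <;> simp
  rw [hshift]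
  simp [Matrix.det_succ_row_zero, Fin.sum_univ_succ, Fin.succAbove]
  ring

theorem isEigC_fourBlock_iff (a b c d : ℝ) (σ : ℂ) :
    IsEigC !![a, 0, 0, c; 0, a, c, 0; d, 0, -b, 0; 0, d, 0, -b] σ ↔
      ((a - σ) * (b + σ) - c * d) * ((a - σ) * (b + σ) + c * d) = 0 := by
  have hmap : (!![a, 0, 0, c; 0, a, c, 0; d, 0, -b, 0; 0, d, 0, -b]).map (fun x : ℝ => (x : ℂ)) =
      !![(a : ℂ), 0, 0, c; 0, a, c, 0; d, 0, -b, 0; 0, d, 0, -b] := by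
    ext i j
    fin_cases i <;> fin_cases j <;> simp
  rw [IsEigC, hmap, det_sub_smul_one_fourBlock]

theorem Complex.re_neg_of_sq_add_mul_add_eq_zero {p q : ℝ} (hp : 0 < p) (hq : 0 < q) {σ : ℂ}
    (h : σ ^ 2 + p * σ + q = 0) : σ.re < 0 := by
  have hre : σ.re ^ 2 - σ.im ^ 2 + p * σ.re + q = 0 := by
    simpa [sq] using congrArg Complex.re h
  have him : σ.im * (2 * σ.re + p) = 0 := by
    have := congrArg Complex.im h
    simp only [sq, Complex.add_im, Complex.mul_im, Complex.ofReal_re,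
      Complex.ofReal_im, Complex.zero_im] at this
    linear_combination this
  by_contra! hσ
  have him0 : σ.im = 0 := by
    rcases mul_eq_zero.mp him with h0 | h0
    · exact h0
    · linarith
  rw [him0] at hre
  nlinarith

theorem re_neg_of_fourBlock_charpoly_eq_zero {a b c d : ℝ} (hb : 0 < b) (hcd : |c * d| < -(a * b))
    {σ : ℂ} (h : ((a - σ) * (b + σ) - c * d) * ((a - σ) * (b + σ) + c * d) = 0) :
    σ.re < 0 := by
  have ha : a < 0 := by nlinarith [abs_nonneg (c * d)]
  have hcd' := abs_lt.mp hcd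
  rcases mul_eq_zero.mp h with h | h
  · refine Complex.re_neg_of_sq_add_mul_add_eq_zero (p := b - a) (q := c * d - a * b)
      (by linarith) (by linarith) ?_
    push_cast
    linear_combination -h
  · refine Complex.re_neg_of_sq_add_mul_add_eq_zero (p := b - a) (q := -(c * d) - a * b)
      (by linarith) (by linarith) ?_
    push_cast
    linear_combination -h

theorem abs_mul_div_mul_sin_le (γ k : ℝ) {δ : ℝ} (hδ : 0 < δ) :
    |γ * (k / δ) * Real.sin (δ * k)| ≤ |γ| / δ * |k| := by
  rw [abs_mul, abs_mul, abs_div, abs_of_pos hδ]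
  calc |γ| * (|k| / δ) * |Real.sin (δ * k)| ≤ |γ| * (|k| / δ) * 1 := by
        gcongr; exact Real.abs_sin_le_one _
    _ = |γ| / δ * |k| := by ring

/-- For `m > 0`, `ε > 0`, `δ > 0`, there exists `K > 0` such that
for every wavenumber `k` with `|k| > K`, every eigenvalue `σ ∈ ℂ` of `A_δ(k)`
satisfies `Re σ < 0`: the range of unstable wavenumbers is bounded. -/
theorem nonlocal_unstable_wavenumbers_bounded
    (m ε δ : ℝ) (hm : 0 < m) (hε : 0 < ε) (hδ : 0 < δ) :
    ∃ K : ℝ, 0 < K ∧ ∀ k : ℝ, K < |k| →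
      ∀ σ : ℂ, IsEigC (Adelta m ε δ k) σ → σ.re < 0 := by
  set b := (1 + m) / ε
  set d := m / (ε * (1 + m))
  set α := 1 - 1 / (1 + m) ^ 2
  set γ := |-2 * (2 - 1 / (1 + m))| / δ
  have hb : 0 < b := by positivity
  have hd : 0 < d := by positivity
  have hα : 0 < α := by
    have hinv : 1 / (1 + m) ^ 2 < 1 := (div_lt_one (by positivity)).mpr (by nlinarith)
    linarith
  have hγ : 0 < γ := by
    have hinv : 1 / (1 + m) < 1 := (div_lt_one (by positivity)).mpr (by linarith)
    exact div_pos (abs_pos.mpr (by linarith)) hδ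
  refine ⟨γ * d / (α * b), by positivity, fun k hk σ hσ => ?_⟩
  rw [Adelta, isEigC_fourBlock_iff] at hσ
  refine re_neg_of_fourBlock_charpoly_eq_zero hb ?_ hσ
  have hk0 : 0 < |k| := lt_trans (by positivity) hk
  have hk' : γ * d < α * b * |k| := (div_lt_iff₀' (by positivity)).mp hk
  calc |-2 * (2 - 1 / (1 + m)) * (k / δ) * Real.sin (δ * k) * d|
      ≤ γ * |k| * d := by
        rw [abs_mul, abs_of_pos hd]; gcongr; exact abs_mul_div_mul_sin_le _ k hδ
    _ = γ * d * |k| := by ring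
    _ < α * b * |k| * |k| := mul_lt_mul_of_pos_right hk' hk0
    _ = -((1 / (1 + m) ^ 2 - 1) * k ^ 2 * b) := by rw [mul_assoc, abs_mul_abs_self]; ring
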